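/- If a finite connected multigraph G has 2k vertices of odd degree with k ≥ 1, then the minimum number of edges that must be duplicated (added as parallel copies of existing edges, or more generally added between vertices) so that the resulting multigraph has an Eulerian circuit equals the minimum total weight of a perfect matching on the odd-degree vertices in the shortest-path metric, when each added edge has weight equal to the shortest-path distance between its endpoints. -/

import Mathlib

/-- A multigraph on vertex type `V` with edge type `E`: each edge has an
(arbitrarily oriented) pair of endpoints; loops and parallel edges allowed. -/
structure Multigraph (V : Type) (E : Type) where
  ends : E → V × V

namespace Multigraph

variable {V E : Type}

/-- Number of incidences of edge `e` at vertex `v` (a loop counts twice). -/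
def inc [DecidableEq V] (G : Multigraph V E) (v : V) (e : E) : ℕ :=
  (if (G.ends e).1 = v then 1 else 0) + (if (G.ends e).2 = v then 1 else 0)

/-- Degree of a vertex: total number of edge incidences, loops counted twice. -/
def degree [DecidableEq V] [Fintype E] (G : Multigraph V E) (v : V) : ℕ :=
  ∑ e : E, G.inc v e

/-- Adjacency: some edge joins `u` and `v` (in either orientation). -/
def Adj (G : Multigraph V E) (u v : V) : Prop :=
  ∃ e : E, G.ends e = (u, v) ∨ G.ends e = (v, u)

/-- Connectivity of the multigraph. -/
def Connected (G : Multigraph V E) : Prop :=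
  ∀ u v : V, Relation.ReflTransGen G.Adj u v

/-- A walk of length `n` in the multigraph: a sequence of vertices joined by
edges, each edge traversed in either direction. -/
structure Walk (G : Multigraph V E) (n : ℕ) where
  verts : Fin (n + 1) → V
  edges : Fin n → E
  valid : ∀ i : Fin n,
    G.ends (edges i) = (verts i.castSucc, verts i.succ) ∨
    G.ends (edges i) = (verts i.succ, verts i.castSucc)

/-- A walk is closed if it starts and ends at the same vertex. -/
def Walk.IsClosed {G : Multigraph V E} {n : ℕ} (w : G.Walk n) : Prop :=
  w.verts 0 = w.verts (Fin.last n)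

/-- A walk traverses every edge exactly once iff its edge sequence is a
bijection onto the edge set. -/
def Walk.IsEulerianTrail {G : Multigraph V E} {n : ℕ} (w : G.Walk n) : Prop :=
  Function.Bijective w.edges

/-- An Eulerian circuit: a closed walk traversing every edge exactly once. -/
def Walk.IsEulerianCircuit {G : Multigraph V E} {n : ℕ} (w : G.Walk n) : Prop :=
  w.IsClosed ∧ w.IsEulerianTrail

end Multigraph

namespace Multigraph

variable {V E : Type}

/-- Weight of a walk under edge weights `wt`. -/
def Walk.weight {G : Multigraph V E} {n : ℕ} (wt : E → ℝ) (w : G.Walk n) : ℝ :=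
  ∑ i : Fin n, wt (w.edges i)

/-- Shortest-path distance between two vertices, as the infimum of walk weights. -/
noncomputable def spDist (G : Multigraph V E) (wt : E → ℝ) (u v : V) : ℝ :=
  sInf {c : ℝ | ∃ (n : ℕ) (w : G.Walk n),
    w.verts 0 = u ∧ w.verts (Fin.last n) = v ∧ c = w.weight wt}

/-- Number of incidences of the added (abstract) edge `p : V × V` at `v`. -/
def pairInc [DecidableEq V] (v : V) (p : V × V) : ℕ :=
  (if p.1 = v then 1 else 0) + (if p.2 = v then 1 else 0)

/-- Adding the multiset `m` of edges makes every degree of `G` even. -/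
def MakesEven [DecidableEq V] [Fintype E] (G : Multigraph V E)
    (m : Multiset (V × V)) : Prop :=
  ∀ v : V, Even (G.degree v + (m.map (pairInc v)).sum)

/-- Total weight of a multiset of added edges, each weighted by the
shortest-path distance between its endpoints. -/
noncomputable def addedCost (G : Multigraph V E) (wt : E → ℝ)
    (m : Multiset (V × V)) : ℝ :=
  (m.map fun p => G.spDist wt p.1 p.2).sum

/-- `m` is a perfect matching on the set of odd-degree vertices: the multiset
of endpoints of `m` is exactly the set of odd-degree vertices, each once. -/
def IsOddMatching [DecidableEq V] [Fintype V] [Fintype E]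
    (G : Multigraph V E) (m : Multiset (V × V)) : Prop :=
  (m.bind fun p => {p.1, p.2}) =
    (Finset.univ.filter fun v => Odd (G.degree v)).val

end Multigraph


namespace Multigraph

variable {V E : Type}

variable {G : Multigraph V E}

def Walk.nil (G : Multigraph V E) (u : V) : G.Walk 0 where
  verts := fun _ => u
  edges := Fin.elim0
  valid := fun i => i.elim0

@[simp] lemma Walk.nil_weight (wt : E → ℝ) (u : V) :
    (Walk.nil G u).weight wt = 0 := by
  simp [Walk.weight]

def Walk.cons {n : ℕ} (w : G.Walk n) (e : E) (u : V)
    (h : G.ends e = (u, w.verts 0) ∨ G.ends e = (w.verts 0, u)) :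
    G.Walk (n + 1) where
  verts := Fin.cases u w.verts
  edges := Fin.cases e w.edges
  valid := by
    intro i
    induction i using Fin.cases with
    | zero =>
        simpa only [Fin.castSucc_zero, Fin.cases_zero, Fin.cases_succ] using h
    | succ j =>
        have h1 : (j.succ).castSucc = (j.castSucc).succ := by
          exact Fin.ext rfl
        simp only [h1, Fin.cases_succ]
        exact w.valid j

@[simp] lemma Walk.cons_weight {n : ℕ} (w : G.Walk n) (e : E) (u : V) (h) (wt : E → ℝ) :
    (Walk.cons w e u h).weight wt = wt e + w.weight wt := by
  simp [Walk.weight, Walk.cons, Fin.sum_univ_succ]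

@[simp] lemma Walk.cons_verts_zero {n : ℕ} (w : G.Walk n) (e : E) (u : V) (h) :
    (Walk.cons w e u h).verts 0 = u := rfl

@[simp] lemma Walk.cons_verts_last {n : ℕ} (w : G.Walk n) (e : E) (u : V) (h) :
    (Walk.cons w e u h).verts (Fin.last (n+1)) = w.verts (Fin.last n) := by
  show Fin.cases u w.verts (Fin.succ (Fin.last n)) = w.verts (Fin.last n)
  exact Fin.cases_succ (Fin.last n)


variable {G : Multigraph V E} {wt : E → ℝ}

def spSet (G : Multigraph V E) (wt : E → ℝ) (u v : V) : Set ℝ :=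
  {c : ℝ | ∃ (n : ℕ) (w : G.Walk n),
    w.verts 0 = u ∧ w.verts (Fin.last n) = v ∧ c = w.weight wt}

lemma spDist_eq (u v : V) : G.spDist wt u v = sInf (spSet G wt u v) := rfl

lemma spSet_nonneg (hwt : ∀ e, 0 < wt e) {u v : V} {c : ℝ} (hc : c ∈ spSet G wt u v) :
    0 ≤ c := by
  obtain ⟨n, w, -, -, rfl⟩ := hc
  exact Finset.sum_nonneg fun i _ => (hwt _).le

lemma spSet_bddBelow (hwt : ∀ e, 0 < wt e) (u v : V) : BddBelow (spSet G wt u v) :=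
  ⟨0, fun c hc => spSet_nonneg hwt hc⟩

lemma exists_walk {u v : V} (h : Relation.ReflTransGen G.Adj u v) :
    ∃ (n : ℕ) (w : G.Walk n), w.verts 0 = u ∧ w.verts (Fin.last n) = v := by
  induction h using Relation.ReflTransGen.head_induction_on with
  | refl => exact ⟨0, Walk.nil G v, rfl, rfl⟩
  | head hadj _ ih =>
      obtain ⟨n, w, h0, hl⟩ := ih
      obtain ⟨e, he⟩ := hadj
      refine ⟨n + 1, w.cons e _ ?_, rfl, ?_⟩
      · rw [h0]; exact he
      · rw [Walk.cons_verts_last]; exact hl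

lemma spSet_nonempty (hconn : G.Connected) (u v : V) : (spSet G wt u v).Nonempty := by
  obtain ⟨n, w, h0, hl⟩ := exists_walk (hconn u v)
  exact ⟨w.weight wt, n, w, h0, hl, rfl⟩

lemma spDist_nonneg (hwt : ∀ e, 0 < wt e) (u v : V) : 0 ≤ G.spDist wt u v :=
  Real.sInf_nonneg fun _ hc => spSet_nonneg hwt hc

/-- Tail of a walk. -/
def Walk.tail {n : ℕ} (w : G.Walk (n + 1)) : G.Walk n where
  verts := fun i => w.verts i.succ
  edges := fun i => w.edges i.succ
  valid := by
    intro i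
    simpa [← Fin.succ_castSucc] using w.valid i.succ

lemma Walk.weight_eq_tail {n : ℕ} (w : G.Walk (n + 1)) :
    w.weight wt = wt (w.edges 0) + w.tail.weight wt := by
  simp [Walk.weight, Walk.tail, Fin.sum_univ_succ]

lemma weight_add_mem : ∀ {n : ℕ} (w1 : G.Walk n) {t : V} {c' : ℝ},
    c' ∈ spSet G wt (w1.verts (Fin.last n)) t → w1.weight wt + c' ∈ spSet G wt (w1.verts 0) t := by
  intro n
  induction n with
  | zero =>
      intro w1 t c' hc'
      have h0 : w1.verts (Fin.last 0) = w1.verts 0 := rfl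
      rw [h0] at hc'
      simpa [Walk.weight] using hc'
  | succ n ih =>
      intro w1 t c' hc'
      have hlast : w1.tail.verts (Fin.last n) = w1.verts (Fin.last (n + 1)) := by
        simp [Walk.tail, Fin.succ_last]
      rw [← hlast] at hc'
      obtain ⟨m, w2, h0, hl, hw⟩ := ih w1.tail hc'
      have h0' : w2.verts 0 = w1.verts 1 := by
        rw [h0]; rfl
      have hv : G.ends (w1.edges 0) = (w1.verts 0, w2.verts 0) ∨
          G.ends (w1.edges 0) = (w2.verts 0, w1.verts 0) := by
        rw [h0']
        simpa [Fin.succ_zero_eq_one] using w1.valid 0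
      refine ⟨m + 1, w2.cons (w1.edges 0) (w1.verts 0) hv, rfl, ?_, ?_⟩
      · rw [Walk.cons_verts_last]; exact hl
      · rw [Walk.cons_weight, Walk.weight_eq_tail, ← hw]
        ring

lemma spDist_triangle (hconn : G.Connected) (hwt : ∀ e, 0 < wt e) (u v t : V) :
    G.spDist wt u t ≤ G.spDist wt u v + G.spDist wt v t := by
  have hC : BddBelow (spSet G wt u t) := spSet_bddBelow hwt u t
  have hA : (spSet G wt u v).Nonempty := spSet_nonempty hconn u v
  have hB : (spSet G wt v t).Nonempty := spSet_nonempty hconn v t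
  have key : ∀ a ∈ spSet G wt u v, ∀ b ∈ spSet G wt v t, sInf (spSet G wt u t) ≤ a + b := by
    intro a ha b hb
    obtain ⟨n, w1, h0, hl, rfl⟩ := ha
    rw [← hl] at hb
    have := weight_add_mem w1 hb
    rw [h0] at this
    exact csInf_le hC this
  have h1 : ∀ b ∈ spSet G wt v t, sInf (spSet G wt u t) - b ≤ sInf (spSet G wt u v) := by
    intro b hb
    refine le_csInf hA fun a ha => ?_
    linarith [key a ha b hb]
  have h2 : sInf (spSet G wt u t) - sInf (spSet G wt u v) ≤ sInf (spSet G wt v t) := by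
    refine le_csInf hB fun b hb => ?_
    linarith [h1 b hb]
  rw [spDist_eq, spDist_eq, spDist_eq]
  linarith

/-- Reverse of a walk. -/
def Walk.reverse {n : ℕ} (w : G.Walk n) : G.Walk n where
  verts := fun i => w.verts i.rev
  edges := fun i => w.edges i.rev
  valid := by
    intro i
    have h1 : (i.castSucc).rev = (i.rev).succ := Fin.rev_castSucc i
    have h2 : (i.succ).rev = (i.rev).castSucc := Fin.rev_succ i
    simp only [h1, h2]
    exact (w.valid i.rev).symm

lemma Walk.reverse_weight {n : ℕ} (w : G.Walk n) :
    w.reverse.weight wt = w.weight wt := by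
  simp only [Walk.weight, Walk.reverse]
  exact Fintype.sum_bijective Fin.rev Fin.rev_involutive.bijective
    (fun i => wt (w.edges i.rev)) (fun i => wt (w.edges i)) (fun i => rfl)

lemma spDist_symm (u v : V) : G.spDist wt u v = G.spDist wt v u := by
  rw [spDist_eq, spDist_eq]
  congr 1
  ext c
  constructor <;>
  · rintro ⟨n, w, h0, hl, rfl⟩
    refine ⟨n, w.reverse, ?_, ?_, (Walk.reverse_weight w).symm⟩
    · show w.verts (0 : Fin (n+1)).rev = _
      rw [Fin.rev_zero, hl]
    · show w.verts (Fin.last n).rev = _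
      rw [Fin.rev_last, h0]


section Comb

variable [DecidableEq V] [Fintype V]

def endsM (M : Multiset (V × V)) : Multiset V := M.bind fun p => {p.1, p.2}

noncomputable def costd (d : V → V → ℝ) (M : Multiset (V × V)) : ℝ :=
  (M.map fun p => d p.1 p.2).sum

noncomputable def oddM (m : Multiset (V × V)) : Multiset V :=
  (Finset.univ.filter fun v => Odd ((m.map (pairInc v)).sum)).val

lemma count_pair (v : V) (p : V × V) :
    Multiset.count v ({p.1, p.2} : Multiset V) = pairInc v p := by
  by_cases h1 : p.1 = v <;> by_cases h2 : p.2 = v <;>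
    simp_all [pairInc, Multiset.count_cons, Multiset.count_singleton, eq_comm]

lemma count_endsM (v : V) (M : Multiset (V × V)) :
    (endsM M).count v = (M.map (pairInc v)).sum := by
  rw [endsM, Multiset.count_bind]
  congr 1
  exact Multiset.map_congr rfl fun p _ => count_pair v p

lemma count_oddM (v : V) (m : Multiset (V × V)) :
    (oddM m).count v = if Odd ((endsM m).count v) then 1 else 0 := by
  rw [oddM, Finset.filter_val, Multiset.count_filter]
  rw [count_endsM]
  split_ifs with h
  · exact Multiset.count_univ v
  · rfl

lemma pair_add (a b : V) (t : Multiset V) : ({a, b} : Multiset V) + t = a ::ₘ b ::ₘ t := by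
  rw [Multiset.insert_eq_cons, Multiset.cons_add, Multiset.singleton_add]

lemma endsM_zero : endsM (0 : Multiset (V × V)) = 0 := rfl

lemma endsM_cons (p : V × V) (M : Multiset (V × V)) :
    endsM (p ::ₘ M) = p.1 ::ₘ p.2 ::ₘ endsM M := by
  rw [endsM, Multiset.cons_bind]
  rw [show ({p.1, p.2} : Multiset V) = p.1 ::ₘ p.2 ::ₘ 0 from rfl]
  rw [Multiset.cons_add, Multiset.cons_add, zero_add]
  rfl

lemma costd_cons (d : V → V → ℝ) (p : V × V) (M : Multiset (V × V)) :
    costd d (p ::ₘ M) = d p.1 p.2 + costd d M := by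
  simp [costd]

lemma costd_erase (d : V → V → ℝ) {q : V × V} {M : Multiset (V × V)} (hq : q ∈ M) :
    costd d M = d q.1 q.2 + costd d (M.erase q) := by
  conv_lhs => rw [← Multiset.cons_erase hq]
  rw [costd_cons]

lemma endsM_erase {q : V × V} {M : Multiset (V × V)} (hq : q ∈ M) :
    endsM M = q.1 ::ₘ q.2 ::ₘ endsM (M.erase q) := by
  conv_lhs => rw [← Multiset.cons_erase hq]
  rw [endsM_cons]

section Surgery

variable (d : V → V → ℝ)

/-- Replace endpoint `x` of some pair by `y`. -/
lemma replace_endpoint (hs : ∀ a b, d a b = d b a) (ht : ∀ a b c, d a c ≤ d a b + d b c)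
    (M : Multiset (V × V)) (x y : V) (hx : x ∈ endsM M) :
    ∃ M' : Multiset (V × V),
      endsM M' = y ::ₘ (endsM M).erase x ∧ costd d M' ≤ costd d M + d x y := by
  rw [endsM, Multiset.mem_bind] at hx
  obtain ⟨q, hqM, hxq⟩ := hx
  by_cases h1 : q.1 = x
  · refine ⟨(y, q.2) ::ₘ M.erase q, ?_, ?_⟩
    · rw [endsM_cons, endsM_erase hqM, h1]
      rw [Multiset.erase_cons_head]
    · rw [costd_cons, costd_erase d hqM, h1]
      have := ht y x q.2
      have h2 := hs y x
      linarith
  · have h2 : q.2 = x := by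
      rcases Multiset.mem_cons.mp hxq with h | h
      · exact absurd h.symm h1
      · exact (Multiset.mem_singleton.mp h).symm
    refine ⟨(q.1, y) ::ₘ M.erase q, ?_, ?_⟩
    · rw [endsM_cons, endsM_erase hqM, h2]
      rw [Multiset.erase_cons_tail _ h1, Multiset.erase_cons_head,
        Multiset.cons_swap]
    · rw [costd_cons, costd_erase d hqM, h2]
      have := ht q.1 x y
      linarith

/-- Remove two endpoints `x ≠ y`, rejoining their partners if needed. -/
lemma remove_pair (h0 : ∀ a b, 0 ≤ d a b) (hs : ∀ a b, d a b = d b a)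
    (ht : ∀ a b c, d a c ≤ d a b + d b c)
    (M : Multiset (V × V)) (x y : V) (hxy : x ≠ y) (hx : x ∈ endsM M)
    (hy : y ∈ (endsM M).erase x) :
    ∃ M' : Multiset (V × V),
      endsM M' = ((endsM M).erase x).erase y ∧ costd d M' ≤ costd d M + d x y := by
  rw [endsM, Multiset.mem_bind] at hx
  obtain ⟨q, hqM, hxq⟩ := hx
  -- normalize q so that it is (x, c1)
  obtain ⟨c1, hq_ends, hq_cost⟩ :
      ∃ c1, ({q.1, q.2} : Multiset V) = {x, c1} ∧ d q.1 q.2 = d x c1 := by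
    by_cases h1 : q.1 = x
    · exact ⟨q.2, by rw [h1], by rw [h1]⟩
    · have h2 : q.2 = x := by
        rcases Multiset.mem_cons.mp hxq with h | h
        · exact absurd h.symm h1
        · exact (Multiset.mem_singleton.mp h).symm
      exact ⟨q.1, by rw [h2, Multiset.pair_comm], by rw [h2, hs]⟩
  have hEM : endsM M = x ::ₘ c1 ::ₘ endsM (M.erase q) := by
    rw [endsM_erase hqM, ← pair_add, hq_ends, pair_add]
  have herase_x : (endsM M).erase x = c1 ::ₘ endsM (M.erase q) := by
    rw [hEM, Multiset.erase_cons_head]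
  by_cases hyc1 : y = c1
  · -- same pair: q joins x and y; drop it
    refine ⟨M.erase q, ?_, ?_⟩
    · rw [herase_x, ← hyc1, Multiset.erase_cons_head]
    · have h1 := h0 q.1 q.2
      have h2 := costd_erase d hqM
      have h3 := h0 x y
      linarith
  · -- y lies in another pair
    have hy' : y ∈ endsM (M.erase q) := by
      rw [herase_x] at hy
      rcases Multiset.mem_cons.mp hy with h | h
      · exact absurd h hyc1
      · exact h
    rw [endsM, Multiset.mem_bind] at hy'
    obtain ⟨r, hrM, hyr⟩ := hy'
    obtain ⟨c2, hr_ends, hr_cost⟩ :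
        ∃ c2, ({r.1, r.2} : Multiset V) = {y, c2} ∧ d r.1 r.2 = d y c2 := by
      by_cases h1 : r.1 = y
      · exact ⟨r.2, by rw [h1], by rw [h1]⟩
      · have h2 : r.2 = y := by
          rcases Multiset.mem_cons.mp hyr with h | h
          · exact absurd h.symm h1
          · exact (Multiset.mem_singleton.mp h).symm
        exact ⟨r.1, by rw [h2, Multiset.pair_comm], by rw [h2, hs]⟩
    have hER : endsM (M.erase q) = y ::ₘ c2 ::ₘ endsM ((M.erase q).erase r) := by
      rw [endsM_erase hrM, ← pair_add, hr_ends, pair_add]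
    refine ⟨(c1, c2) ::ₘ (M.erase q).erase r, ?_, ?_⟩
    · rw [endsM_cons, herase_x, hER]
      rw [Multiset.erase_cons_tail _ (fun h => hyc1 h.symm), Multiset.erase_cons_head]
    · rw [costd_cons, costd_erase d hqM, costd_erase d hrM, hq_cost, hr_cost]
      have t1 := ht c1 x c2
      have t2 := ht x y c2
      have e1 := hs c1 x
      have e2 := hs y c2
      simp only []
      linarith

end Surgery

lemma count_erase' (s : Multiset V) (a v : V) :
    (s.erase a).count v = s.count v - if v = a then 1 else 0 := by
  by_cases h : v = a
  · subst h; simp [Multiset.count_erase_self]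
  · simp [Multiset.count_erase_of_ne h, h]

lemma exists_matching_le (d : V → V → ℝ) (h0 : ∀ a b, 0 ≤ d a b)
    (hs : ∀ a b, d a b = d b a) (ht : ∀ a b c, d a c ≤ d a b + d b c)
    (m : Multiset (V × V)) :
    ∃ M : Multiset (V × V), endsM M = oddM m ∧ costd d M ≤ costd d m := by
  induction m using Multiset.strongInductionOn with
  | _ m IH =>
  rcases eq_or_ne m 0 with rfl | hne
  · refine ⟨0, ?_, le_refl _⟩
    simp [endsM_zero, oddM]
  · obtain ⟨p, hp⟩ := Multiset.exists_mem_of_ne_zero hne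
    have hlt : m.erase p < m := Multiset.erase_lt.mpr hp
    obtain ⟨M', hM'e, hM'c⟩ := IH (m.erase p) hlt
    have hcons : p ::ₘ m.erase p = m := Multiset.cons_erase hp
    have hcnt : ∀ v, (endsM m).count v = pairInc v p + (endsM (m.erase p)).count v := by
      intro v
      conv_lhs => rw [← hcons]
      rw [count_endsM, count_endsM, Multiset.map_cons, Multiset.sum_cons]
    have hcM' : ∀ v, (endsM M').count v
        = if Odd ((endsM (m.erase p)).count v) then 1 else 0 := by
      intro v; rw [hM'e, count_oddM]
    have hcostm : costd d m = d p.1 p.2 + costd d (m.erase p) := by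
      conv_lhs => rw [← hcons]
      rw [costd_cons]
    have hpi : ∀ v, pairInc v p = (if p.1 = v then 1 else 0) + (if p.2 = v then 1 else 0) :=
      fun v => rfl
    by_cases hxy : p.1 = p.2
    · refine ⟨M', ?_, ?_⟩
      · rw [hM'e]; ext v
        rw [count_oddM, count_oddM, hcnt v, hpi v, ← hxy]
        simp only [Nat.odd_iff]
        by_cases hv : p.1 = v
        · simp [hv]
          all_goals split_ifs <;> omega
        · simp [hv]
      · have := h0 p.1 p.2
        linarith
    · by_cases hOx : Odd ((endsM (m.erase p)).count p.1) <;>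
        by_cases hOy : Odd ((endsM (m.erase p)).count p.2)
      · -- both odd: remove the pair
        have hxmem : p.1 ∈ endsM M' := by
          rw [← Multiset.count_pos, hcM']; simp [hOx]
        have hymem : p.2 ∈ (endsM M').erase p.1 := by
          rw [← Multiset.count_pos, count_erase', hcM']
          simp [hOy, (show ¬ p.2 = p.1 from fun h => hxy h.symm)]
        obtain ⟨M2, hM2e, hM2c⟩ := remove_pair d h0 hs ht M' p.1 p.2 hxy hxmem hymem
        refine ⟨M2, ?_, ?_⟩
        · rw [hM2e]; ext v
          rw [count_erase', count_erase', hcM', count_oddM, hcnt v, hpi v]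
          simp only [Nat.odd_iff] at hOx hOy ⊢
          by_cases hvx : v = p.1
          · subst hvx
            simp [hxy, (show ¬ p.2 = p.1 from fun h => hxy h.symm)]
            all_goals split_ifs <;> omega
          · by_cases hvy : v = p.2
            · subst hvy
              simp [hxy, hvx]
              all_goals split_ifs <;> omega
            · simp [hvx, hvy, (show ¬ p.1 = v from fun h => hvx h.symm),
                (show ¬ p.2 = v from fun h => hvy h.symm)]
              all_goals split_ifs <;> omega
        · linarith
      · -- x odd, y even: replace x by y in its pair
        have hxmem : p.1 ∈ endsM M' := by
          rw [← Multiset.count_pos, hcM']; simp [hOx]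
        obtain ⟨M2, hM2e, hM2c⟩ := replace_endpoint d hs ht M' p.1 p.2 hxmem
        refine ⟨M2, ?_, ?_⟩
        · rw [hM2e]; ext v
          rw [Multiset.count_cons, count_erase', hcM', count_oddM, hcnt v, hpi v]
          simp only [Nat.odd_iff] at hOx hOy ⊢
          by_cases hvx : v = p.1
          · subst hvx
            simp [hxy, (show ¬ p.2 = p.1 from fun h => hxy h.symm),
              (show ¬ p.1 = p.2 from hxy)]
            all_goals split_ifs <;> omega
          · by_cases hvy : v = p.2
            · subst hvy
              simp [hxy, hvx]
              all_goals split_ifs <;> omega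
            · simp [hvx, hvy, (show ¬ p.1 = v from fun h => hvx h.symm),
                (show ¬ p.2 = v from fun h => hvy h.symm)]
              all_goals split_ifs <;> omega
        · linarith
      · -- x even, y odd: replace y by x in its pair
        have hymem : p.2 ∈ endsM M' := by
          rw [← Multiset.count_pos, hcM']; simp [hOy]
        obtain ⟨M2, hM2e, hM2c⟩ := replace_endpoint d hs ht M' p.2 p.1 hymem
        refine ⟨M2, ?_, ?_⟩
        · rw [hM2e]; ext v
          rw [Multiset.count_cons, count_erase', hcM', count_oddM, hcnt v, hpi v]
          simp only [Nat.odd_iff] at hOx hOy ⊢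
          by_cases hvx : v = p.1
          · subst hvx
            simp [hxy, (show ¬ p.2 = p.1 from fun h => hxy h.symm),
              (show ¬ p.1 = p.2 from hxy)]
            all_goals split_ifs <;> omega
          · by_cases hvy : v = p.2
            · subst hvy
              simp [hxy, hvx]
              all_goals split_ifs <;> omega
            · simp [hvx, hvy, (show ¬ p.1 = v from fun h => hvx h.symm),
                (show ¬ p.2 = v from fun h => hvy h.symm)]
              all_goals split_ifs <;> omega
        · have := hs p.2 p.1
          linarith
      · -- both even: add the pair itself
        refine ⟨p ::ₘ M', ?_, ?_⟩
        · rw [endsM_cons]; ext v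
          rw [Multiset.count_cons, Multiset.count_cons, hcM', count_oddM, hcnt v, hpi v]
          simp only [Nat.odd_iff] at hOx hOy ⊢
          by_cases hvx : v = p.1
          · subst hvx
            simp [hxy, (show ¬ p.2 = p.1 from fun h => hxy h.symm),
              (show ¬ p.1 = p.2 from hxy)]
            all_goals split_ifs <;> omega
          · by_cases hvy : v = p.2
            · subst hvy
              simp [hxy, hvx]
              all_goals split_ifs <;> omega
            · simp [hvx, hvy, (show ¬ p.1 = v from fun h => hvx h.symm),
                (show ¬ p.2 = v from fun h => hvy h.symm)]
              all_goals split_ifs <;> omega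
        · rw [costd_cons]
          linarith

lemma exists_pairing :
    ∀ s : Multiset V, Even (Multiset.card s) → ∃ M : Multiset (V × V), endsM M = s := by
  intro s
  induction s using Multiset.strongInductionOn with
  | _ s IH =>
  intro hev
  rcases eq_or_ne s 0 with rfl | hne
  · exact ⟨0, rfl⟩
  · obtain ⟨x, hx⟩ := Multiset.exists_mem_of_ne_zero hne
    have h1 : Multiset.card (s.erase x) = Multiset.card s - 1 :=
      Multiset.card_erase_of_mem hx
    have hc1 : 0 < Multiset.card s := Multiset.card_pos.mpr hne
    obtain ⟨k, hk⟩ := hev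
    have hne2 : s.erase x ≠ 0 := by
      intro h
      rw [h] at h1
      simp only [Multiset.card_zero] at h1
      omega
    obtain ⟨y, hy⟩ := Multiset.exists_mem_of_ne_zero hne2
    have h2 : Multiset.card ((s.erase x).erase y) = Multiset.card s - 2 := by
      rw [Multiset.card_erase_of_mem hy, h1]
      simp only [Nat.pred_eq_sub_one]
      omega
    have hlt : (s.erase x).erase y < s :=
      lt_of_le_of_lt (Multiset.erase_le y (s.erase x)) (Multiset.erase_lt.mpr hx)
    have hev2 : Even (Multiset.card ((s.erase x).erase y)) := by
      rw [h2]
      refine ⟨k - 1, ?_⟩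
      omega
    obtain ⟨M, hM⟩ := IH ((s.erase x).erase y) hlt hev2
    refine ⟨(x, y) ::ₘ M, ?_⟩
    rw [endsM_cons, hM]
    show x ::ₘ y ::ₘ (s.erase x).erase y = s
    rw [Multiset.cons_erase hy, Multiset.cons_erase hx]

end Comb

end Multigraph

open Multigraph in
/-- If a finite connected multigraph has `2k` odd-degree vertices, `k ≥ 1`,
then the minimum total weight of added edges (each weighted by the
shortest-path distance between its endpoints) making every vertex degree even
equals the minimum weight of a perfect matching of the odd-degree vertices in
the shortest-path metric. -/
theorem min_even_augmentation_eq_min_odd_matching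
    {V E : Type} [Fintype V] [Fintype E] [DecidableEq V]
    (G : Multigraph V E) (hconn : G.Connected)
    (wt : E → ℝ) (hwt : ∀ e, 0 < wt e)
    (k : ℕ) (hk : 1 ≤ k)
    (hodd : (Finset.univ.filter fun v => Odd (G.degree v)).card = 2 * k) :
    sInf {c : ℝ | ∃ m : Multiset (V × V), G.MakesEven m ∧ c = G.addedCost wt m}
      = sInf {c : ℝ | ∃ m : Multiset (V × V),
          G.IsOddMatching m ∧ c = G.addedCost wt m} := by
  classical
  have hd0 : ∀ a b : V, 0 ≤ G.spDist wt a b := fun a b => spDist_nonneg hwt a b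
  have hdsymm : ∀ a b : V, G.spDist wt a b = G.spDist wt b a := fun a b => spDist_symm a b
  have hdtri : ∀ a b c : V, G.spDist wt a c ≤ G.spDist wt a b + G.spDist wt b c :=
    fun a b c => spDist_triangle hconn hwt a b c
  have hcost : ∀ m : Multiset (V × V), G.addedCost wt m = costd (G.spDist wt) m :=
    fun m => rfl
  have hmk : ∀ M : Multiset (V × V), G.IsOddMatching M → G.MakesEven M := by
    intro M hM v
    have h1 : (M.map (pairInc v)).sum = (endsM M).count v := (count_endsM v M).symm
    have h2 : endsM M = (Finset.univ.filter fun v => Odd (G.degree v)).val := hM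
    rw [h1, h2, Finset.filter_val, Multiset.count_filter]
    by_cases hv : Odd (G.degree v)
    · rw [if_pos hv, Multiset.count_univ]
      rw [Nat.odd_iff] at hv
      rw [Nat.even_iff]
      omega
    · rw [if_neg hv]
      rw [Nat.odd_iff] at hv
      rw [Nat.even_iff]
      omega
  have hoddM : ∀ m : Multiset (V × V), G.MakesEven m →
      oddM m = (Finset.univ.filter fun v => Odd (G.degree v)).val := by
    intro m hm
    unfold oddM
    congr 1
    apply Finset.filter_congr
    intro v _
    have h := hm v
    rw [Nat.even_iff] at h
    rw [Nat.odd_iff, Nat.odd_iff]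
    omega
  have hOcard : Even (Multiset.card (Finset.univ.filter fun v => Odd (G.degree v)).val) := by
    have h1 : Multiset.card (Finset.univ.filter fun v => Odd (G.degree v)).val
        = (Finset.univ.filter fun v => Odd (G.degree v)).card := rfl
    rw [h1, hodd]
    exact ⟨k, by omega⟩
  obtain ⟨M0, hM0⟩ := exists_pairing (Finset.univ.filter fun v => Odd (G.degree v)).val hOcard
  have hM0match : G.IsOddMatching M0 := hM0
  set A := {c : ℝ | ∃ m : Multiset (V × V), G.MakesEven m ∧ c = G.addedCost wt m} with hA
  set B := {c : ℝ | ∃ m : Multiset (V × V), G.IsOddMatching m ∧ c = G.addedCost wt m} with hB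
  have hBsubA : B ⊆ A := by
    rintro c ⟨m, hm, rfl⟩
    exact ⟨m, hmk m hm, rfl⟩
  have hAnn : ∀ c ∈ A, (0:ℝ) ≤ c := by
    rintro c ⟨m, hm, rfl⟩
    apply Multiset.sum_nonneg
    intro z hz
    obtain ⟨q, hq, rfl⟩ := Multiset.mem_map.mp hz
    exact hd0 q.1 q.2
  have hAbdd : BddBelow A := ⟨0, fun c hc => hAnn c hc⟩
  have hBbdd : BddBelow B := ⟨0, fun c hc => hAnn c (hBsubA hc)⟩
  have hBne : B.Nonempty := ⟨G.addedCost wt M0, M0, hM0match, rfl⟩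
  have hAne : A.Nonempty := ⟨G.addedCost wt M0, M0, hmk M0 hM0match, rfl⟩
  apply le_antisymm
  · exact csInf_le_csInf hAbdd hBne hBsubA
  · refine le_csInf hAne ?_
    rintro c ⟨m, hm, rfl⟩
    obtain ⟨M, hMe, hMc⟩ := exists_matching_le (G.spDist wt) hd0 hdsymm hdtri m
    have hMmatch : G.IsOddMatching M := by
      show endsM M = (Finset.univ.filter fun v => Odd (G.degree v)).val
      rw [hMe, hoddM m hm]
    calc sInf B ≤ G.addedCost wt M := csInf_le hBbdd ⟨M, hMmatch, rfl⟩
      _ ≤ G.addedCost wt m := by rw [hcost, hcost]; exact hMc
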